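/- arXiv:1901.03247 — 2 statements merged into one kernel-verified Lean document; each statement's English description precedes it below -/
import Mathlib

section
/- The number of reduced words of the longest permutation of S_n is maximal among all permutations: for any w in S_n, the number of reduced words of w is at most the number of reduced words of the longest element w_0 = n, n-1, ..., 2, 1. -/
/-- The adjacent transposition `s i`, swapping `i` and `i+1` (0-indexed). -/
def s (i : ℕ) : Equiv.Perm ℕ := Equiv.swap i (i + 1)

/-- The product `s i₁ * s i₂ * ⋯ * s iₗ` of a word. -/
def wordProd (l : List ℕ) : Equiv.Perm ℕ := (l.map s).prod

/-- The Coxeter length of `w`: the minimal length of a word in the `s i` representing `w`. -/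
noncomputable def len (w : Equiv.Perm ℕ) : ℕ :=
  sInf {N | ∃ l : List ℕ, l.length = N ∧ wordProd l = w}

/-- `l` is a reduced word for `w`. -/
def IsReducedWord (w : Equiv.Perm ℕ) (l : List ℕ) : Prop :=
  wordProd l = w ∧ l.length = len w

/-- The number of reduced words of `w`. -/
noncomputable def numRed (w : Equiv.Perm ℕ) : ℕ :=
  Set.ncard {l : List ℕ | IsReducedWord w l}

/-- The longest element of `S n`: `i ↦ n - 1 - i` for `i < n` (0-indexed). -/
noncomputable def w0 (n : ℕ) : Equiv.Perm ℕ :=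
  Function.Involutive.toPerm (fun i => if i < n then n - 1 - i else i)
    (by intro i; dsimp only; split_ifs <;> omega)

/-!
The length of a permutation of `ℕ` fixing everything from `n` on is its number of inversions
below `n`. Since `w₀` inverts every pair below `n`, the inversions of `w₀ * w⁻¹` are exactly the
non-inversions of `w⁻¹`, so `len (w₀ * w⁻¹) + len w = len w₀`. Prefixing a fixed reduced word of
`w₀ * w⁻¹` therefore maps reduced words of `w` injectively to reduced words of `w₀`, of which
there are finitely many since their letters are all below `n`.
-/

open Finset

lemma s_apply (i a : ℕ) : s i a = if a = i then i + 1 else if a = i + 1 then i else a := by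
  simp only [s, Equiv.swap_apply_def]

lemma s_apply_s (i a : ℕ) : s i (s i a) = a := Equiv.swap_apply_self _ _ _

lemma s_mul_self (i : ℕ) : s i * s i = 1 := Equiv.swap_mul_self _ _

lemma s_inv (i : ℕ) : (s i)⁻¹ = s i := Equiv.swap_inv _ _

lemma s_lt_s {i a b : ℕ} (hab : a < b) (hne : (a, b) ≠ (i, i + 1)) : s i a < s i b := by
  rw [s_apply, s_apply]
  split_ifs <;> simp_all <;> omega

lemma wordProd_append (l₁ l₂ : List ℕ) : wordProd (l₁ ++ l₂) = wordProd l₁ * wordProd l₂ := by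
  simp only [wordProd, List.map_append, List.prod_append]

lemma wordProd_concat (l : List ℕ) (i : ℕ) : wordProd (l ++ [i]) = wordProd l * s i := by
  simp [wordProd]

lemma wordProd_reverse (l : List ℕ) : wordProd l.reverse = (wordProd l)⁻¹ := by
  simp [wordProd, List.prod_inv_reverse, List.map_reverse, Function.comp_def, s_inv]

lemma len_le_length {w : Equiv.Perm ℕ} {l : List ℕ} (h : wordProd l = w) : len w ≤ l.length :=
  Nat.sInf_le ⟨l, rfl, h⟩

lemma len_inv (w : Equiv.Perm ℕ) : len w⁻¹ = len w := by
  unfold len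
  congr 1
  ext N
  constructor <;> rintro ⟨l, rfl, hl⟩ <;> refine ⟨l.reverse, List.length_reverse, ?_⟩
  · rw [wordProd_reverse, hl, inv_inv]
  · rw [wordProd_reverse, hl]

def FixesFrom (N : ℕ) (v : Equiv.Perm ℕ) : Prop := ∀ k, N ≤ k → v k = k

namespace FixesFrom

variable {N : ℕ} {u v : Equiv.Perm ℕ}

lemma mono (hv : FixesFrom N v) {M : ℕ} (hNM : N ≤ M) : FixesFrom M v :=
  fun k hk => hv k (hNM.trans hk)

lemma apply_lt (hv : FixesFrom N v) {a : ℕ} (ha : a < N) : v a < N := by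
  by_contra! h
  exact ha.not_ge (v.injective (hv _ h) ▸ h)

lemma apply_lt_apply_succ (hv : FixesFrom N v) {i : ℕ} (hi : N ≤ i + 1) : v i < v (i + 1) := by
  rw [hv _ hi]
  rcases lt_or_ge i N with hiN | hiN
  · exact (hv.apply_lt hiN).trans_le hi
  · rw [hv _ hiN]; omega

lemma inv (hv : FixesFrom N v) : FixesFrom N v⁻¹ :=
  fun k hk => by rw [Equiv.Perm.inv_eq_iff_eq, hv k hk]

lemma mul (hu : FixesFrom N u) (hv : FixesFrom N v) : FixesFrom N (u * v) :=
  fun k hk => by rw [Equiv.Perm.mul_apply, hv k hk, hu k hk]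

end FixesFrom

lemma fixesFrom_s {N i : ℕ} (hi : i + 1 < N) : FixesFrom N (s i) :=
  fun k hk => by rw [s_apply]; split_ifs <;> omega

lemma w0_apply (n a : ℕ) : w0 n a = if a < n then n - 1 - a else a := rfl

lemma fixesFrom_w0 (n : ℕ) : FixesFrom n (w0 n) :=
  fun k hk => if_neg (by omega)

def inversions (N : ℕ) (v : Equiv.Perm ℕ) : Finset (ℕ × ℕ) :=
  (range N ×ˢ range N).filter fun p => p.1 < p.2 ∧ v p.2 < v p.1

def invCount (N : ℕ) (v : Equiv.Perm ℕ) : ℕ := #(inversions N v)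

@[simp]
lemma mem_inversions {N : ℕ} {v : Equiv.Perm ℕ} {p : ℕ × ℕ} :
    p ∈ inversions N v ↔ (p.1 < N ∧ p.2 < N) ∧ p.1 < p.2 ∧ v p.2 < v p.1 := by
  simp [inversions]

section Inversions

variable {N i : ℕ} {v : Equiv.Perm ℕ}

lemma invCount_one (N : ℕ) : invCount N 1 = 0 := by
  rw [invCount, card_eq_zero, inversions, filter_eq_empty_iff]
  intro p _
  simp only [Equiv.Perm.one_apply]
  omega

lemma invCount_eq_of_le (hv : FixesFrom N v) {M : ℕ} (hNM : N ≤ M) :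
    invCount M v = invCount N v := by
  refine congrArg Finset.card (Finset.ext fun ⟨a, b⟩ => ?_)
  simp only [mem_inversions]
  constructor
  · rintro ⟨-, hab, hv_ab⟩
    have hb : b < N := by
      by_contra! hb
      rcases lt_or_ge a N with ha | ha
      · have := hv.apply_lt ha; rw [hv b hb] at hv_ab; omega
      · rw [hv b hb, hv a ha] at hv_ab; omega
    exact ⟨⟨by omega, hb⟩, hab, hv_ab⟩
  · rintro ⟨⟨ha, hb⟩, hab, hv_ab⟩
    exact ⟨⟨by omega, by omega⟩, hab, hv_ab⟩

/-- Right multiplication by `s i` relabels the inversions other than `(i, i + 1)` through `s i`. -/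
lemma card_inversions_mul_s_erase (hi : i + 1 < N) :
    #((inversions N (v * s i)).erase (i, i + 1)) = #((inversions N v).erase (i, i + 1)) := by
  have key : ∀ (v : Equiv.Perm ℕ) (p : ℕ × ℕ), p ∈ (inversions N v).erase (i, i + 1) →
      (s i p.1, s i p.2) ∈ (inversions N (v * s i)).erase (i, i + 1) := by
    rintro v ⟨a, b⟩ hp
    simp only [mem_erase, mem_inversions] at hp ⊢
    obtain ⟨hne, ⟨ha, hb⟩, hab, hv_ab⟩ := hp
    have hlt := s_lt_s hab hne
    refine ⟨fun h => ?_, ⟨?_, ?_⟩, hlt, by simpa [s_apply_s] using hv_ab⟩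
    · simp only [Prod.mk.injEq] at h
      rw [s_apply, s_apply] at h
      split_ifs at h <;> omega
    all_goals rw [s_apply]; split_ifs <;> omega
  symm
  refine Finset.card_equiv ((s i).prodCongr (s i)) fun p => ⟨key v p, fun hp => ?_⟩
  simpa [mul_assoc, s_mul_self, s_apply_s] using key _ _ hp

lemma invCount_mul_s_of_lt (hi : i + 1 < N) (h : v i < v (i + 1)) :
    invCount N (v * s i) = invCount N v + 1 := by
  have hs : s i i = i + 1 ∧ s i (i + 1) = i := by simp [s_apply]
  have hmem : (i, i + 1) ∈ inversions N (v * s i) := by simp [hs, h, hi]; omega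
  have hnmem : (i, i + 1) ∉ inversions N v := by simp [h.le]
  rw [invCount, ← card_erase_add_one hmem, card_inversions_mul_s_erase hi,
    erase_eq_of_notMem hnmem, invCount]

lemma invCount_mul_s_of_gt (hi : i + 1 < N) (h : v (i + 1) < v i) :
    invCount N (v * s i) + 1 = invCount N v := by
  have := invCount_mul_s_of_lt (v := v * s i) hi (by simpa [s_apply] using h)
  rwa [mul_assoc, s_mul_self, mul_one, eq_comm] at this

lemma invCount_mul_s_le (hi : i + 1 < N) : invCount N (v * s i) ≤ invCount N v + 1 := by
  rcases lt_or_gt_of_ne (v.injective.ne (show i ≠ i + 1 by omega)) with h | h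
  · exact (invCount_mul_s_of_lt hi h).le
  · have := invCount_mul_s_of_gt hi h; omega

lemma invCount_wordProd_le {l : List ℕ} (hl : ∀ x ∈ l, x + 1 < N) :
    invCount N (wordProd l) ≤ l.length := by
  induction l using List.reverseRecOn with
  | nil => simp [wordProd, invCount_one]
  | append_singleton l i ih =>
    simp only [List.mem_append, List.mem_singleton] at hl
    rw [wordProd_concat, List.length_append, List.length_singleton]
    exact (invCount_mul_s_le (hl i (Or.inr rfl))).trans
      (Nat.add_le_add_right (ih fun x hx => hl x (Or.inl hx)) 1)

lemma exists_descent_of_ne_one (hv : FixesFrom N v) (h1 : v ≠ 1) :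
    ∃ i, i + 1 < N ∧ v (i + 1) < v i := by
  by_contra! h
  refine h1 (Equiv.ext fun a => ?_)
  have hmono : StrictMono v := strictMono_nat_of_lt_succ fun i => by
    rcases lt_or_ge (i + 1) N with hi | hi
    · exact (h i hi).lt_of_ne (v.injective.ne (by omega))
    · exact hv.apply_lt_apply_succ hi
  exact congrArg (· a) (Subsingleton.elim (hmono.orderIsoOfSurjective v v.surjective)
    (OrderIso.refl ℕ))

lemma exists_word_length_eq_invCount (hv : FixesFrom N v) :
    ∃ l : List ℕ, (∀ x ∈ l, x + 1 < N) ∧ l.length = invCount N v ∧ wordProd l = v := by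
  induction hk : invCount N v generalizing v with
  | zero =>
    refine ⟨[], by simp, rfl, ?_⟩
    by_contra h1
    obtain ⟨i, hi, hdesc⟩ := exists_descent_of_ne_one hv (Ne.symm h1)
    have : (i, i + 1) ∈ inversions N v := by simp [hdesc, hi]; omega
    exact (card_ne_zero_of_mem this) hk
  | succ k ih =>
    obtain ⟨i, hi, hdesc⟩ := exists_descent_of_ne_one hv (by rintro rfl; simp [invCount_one] at hk)
    obtain ⟨l, hl, hlen, hprod⟩ :=
      ih (hv.mul (fixesFrom_s hi)) (by have := invCount_mul_s_of_gt hi hdesc; omega)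
    refine ⟨l ++ [i], ?_, by simp [hlen], ?_⟩
    · simpa [or_imp, forall_and] using ⟨hl, hi⟩
    · rw [wordProd_concat, hprod, mul_assoc, s_mul_self, mul_one]

end Inversions

section Length

variable {N i : ℕ} {v w : Equiv.Perm ℕ}

lemma invCount_le_length (hw : FixesFrom N w) {l : List ℕ} (hl : wordProd l = w) :
    invCount N w ≤ l.length := by
  have hlet : ∀ x ∈ l, x + 1 < N + l.sum + 2 := fun x hx => by
    have := List.le_sum_of_mem hx; omega
  rw [← invCount_eq_of_le hw (by omega : N ≤ N + l.sum + 2), ← hl]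
  exact invCount_wordProd_le hlet

lemma len_eq_invCount (hw : FixesFrom N w) : len w = invCount N w := by
  obtain ⟨l, -, hlen, hl⟩ := exists_word_length_eq_invCount hw
  refine (hlen ▸ len_le_length hl).antisymm (le_csInf ⟨_, l, rfl, hl⟩ ?_)
  rintro _ ⟨l', rfl, hl'⟩
  exact invCount_le_length hw hl'

lemma exists_isReducedWord (hw : FixesFrom N w) : ∃ l, IsReducedWord w l := by
  obtain ⟨l, -, hlen, hl⟩ := exists_word_length_eq_invCount hw
  exact ⟨l, hl, hlen.trans (len_eq_invCount hw).symm⟩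

lemma len_mul_s_of_lt (hv : FixesFrom N v) (h : v i < v (i + 1)) :
    len (v * s i) = len v + 1 := by
  have hM : i + 1 < max N (i + 2) := by omega
  have hvM := hv.mono (le_max_left N (i + 2))
  rw [len_eq_invCount hvM, len_eq_invCount (hvM.mul (fixesFrom_s hM)), invCount_mul_s_of_lt hM h]

lemma IsReducedWord.forall_mem_succ_lt {l : List ℕ} (hw : FixesFrom N w)
    (hl : IsReducedWord w l) :
    ∀ x ∈ l, x + 1 < N := by
  induction l using List.reverseRecOn generalizing w with
  | nil => simp
  | append_singleton l i ih =>
    obtain ⟨hprod, hlen⟩ := hl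
    rw [List.length_append, List.length_singleton] at hlen
    have hv : wordProd l = w * s i := by
      rw [← hprod, wordProd_concat, mul_assoc, s_mul_self, mul_one]
    have hshort : len (w * s i) ≤ l.length := hv ▸ len_le_length rfl
    have hdesc : w (i + 1) < w i := by
      refine (lt_or_gt_of_ne (w.injective.ne (show i + 1 ≠ i by omega))).resolve_right
        fun h => ?_
      have := len_mul_s_of_lt hw h; omega
    have hi : i + 1 < N := by
      by_contra! hi
      exact (hw.apply_lt_apply_succ hi).not_gt hdesc
    have hvfix : FixesFrom N (w * s i) := hw.mul (fixesFrom_s hi)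
    have hasc : (w * s i) i < (w * s i) (i + 1) := by simpa [s_apply] using hdesc
    have hvred : IsReducedWord (w * s i) l := by
      refine ⟨hv, ?_⟩
      have := len_mul_s_of_lt hvfix hasc
      rw [mul_assoc, s_mul_self, mul_one] at this
      omega
    simpa [or_imp, forall_and] using ⟨ih hvfix hvred, hi⟩

lemma finite_setOf_isReducedWord (hw : FixesFrom N w) : {l | IsReducedWord w l}.Finite := by
  refine ((List.finite_length_eq {x // x < N} (len w)).image (List.map Subtype.val)).subset ?_
  intro l hl
  lift l to List {x // x < N} using fun x hx => by have := hl.forall_mem_succ_lt hw x hx; omega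
  exact ⟨l, by simpa using hl.2, rfl⟩

lemma IsReducedWord.append {l m : List ℕ} (hu : IsReducedWord v m) (hl : IsReducedWord w l)
    (hlen : len (v * w) = len v + len w) : IsReducedWord (v * w) (m ++ l) :=
  ⟨by rw [wordProd_append, hu.1, hl.1], by rw [List.length_append, hu.2, hl.2, hlen]⟩

lemma numRed_le_of_mul_eq {u : Equiv.Perm ℕ} (huv : v * w = u) (hv : ∃ m, IsReducedWord v m)
    (hfin : {l | IsReducedWord u l}.Finite) (hlen : len u = len v + len w) :
    numRed w ≤ numRed u := by
  subst huv
  obtain ⟨m, hm⟩ := hv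
  exact Set.ncard_le_ncard_of_injOn (m ++ ·) (fun l hl => hm.append hl hlen)
    (fun _ _ _ _ h => List.append_cancel_left h) hfin

end Length

lemma invCount_w0_mul_add {n : ℕ} {x : Equiv.Perm ℕ} (hx : FixesFrom n x) :
    invCount n (w0 n * x) + invCount n x = invCount n (w0 n) := by
  set P := (range n ×ˢ range n).filter fun p => p.1 < p.2
  have hw0 : inversions n (w0 n) = P := by
    refine filter_congr fun ⟨a, b⟩ hab => ?_
    simp only [mem_product, mem_range] at hab
    simp only [w0_apply, if_pos hab.1, if_pos hab.2]
    omega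
  have hx' : inversions n x = P.filter fun p => x p.2 < x p.1 := by
    rw [inversions, filter_filter]
  have hw0x : inversions n (w0 n * x) = P.filter fun p => ¬ x p.2 < x p.1 := by
    rw [inversions, filter_filter]
    refine filter_congr fun ⟨a, b⟩ hab => ?_
    simp only [mem_product, mem_range] at hab
    have hxa := hx.apply_lt hab.1
    have hxb := hx.apply_lt hab.2
    simp only [Equiv.Perm.mul_apply, w0_apply, if_pos hxa, if_pos hxb]
    refine and_congr_right fun hlt => ?_
    have hne : x a ≠ x b := x.injective.ne hlt.ne
    omega
  rw [invCount, invCount, invCount, hw0, hx', hw0x, add_comm]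
  exact card_filter_add_card_filter_not _

lemma len_w0_mul_inv_add_len {n : ℕ} {w : Equiv.Perm ℕ} (hw : FixesFrom n w) :
    len (w0 n * w⁻¹) + len w = len (w0 n) := by
  rw [← len_inv w, len_eq_invCount ((fixesFrom_w0 n).mul hw.inv), len_eq_invCount hw.inv,
    len_eq_invCount (fixesFrom_w0 n)]
  exact invCount_w0_mul_add hw.inv

/-- for any `w ∈ Sₙ`, `#Red(w) ≤ #Red(w₀)`. -/
theorem numRed_le_numRed_w0 (n : ℕ) (w : Equiv.Perm ℕ) (hw : ∀ k, n ≤ k → w k = k) :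
    numRed w ≤ numRed (w0 n) := by
  exact numRed_le_of_mul_eq (inv_mul_cancel_right (w0 n) w)
    (exists_isReducedWord ((fixesFrom_w0 n).mul (FixesFrom.inv hw)))
    (finite_setOf_isReducedWord (fixesFrom_w0 n)) (len_w0_mul_inv_add_len hw).symm
end

section
/- If u and u' are permutations in S_n that differ in exactly three positions, then the number of 2143-pattern occurrences in u exceeds that in u' by at most 2n^3 + 3n^2 - n. -/
/-!
An occurrence of `2143` in `u` that avoids the three positions where `u` and `u'` differ is
also an occurrence in `u'`. Every other increasing quadruple has one of its four entries in
that three-element set, and deleting that entry leaves an increasing triple, so there are at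
most `4 · 3 · C(n, 3) ≤ 2n³` of them.
-/

/-- `N_{2143,n}(u)`: the number of occurrences of the pattern `2143` in `u ∈ S_n`,
i.e. of tuples `t₁ < t₂ < t₃ < t₄` with `u t₂ < u t₁ < u t₄ < u t₃`. -/
noncomputable def N2143 (n : ℕ) (u : Equiv.Perm (Fin n)) : ℕ :=
  Nat.card {t : Fin n × Fin n × Fin n × Fin n //
    t.1 < t.2.1 ∧ t.2.1 < t.2.2.1 ∧ t.2.2.1 < t.2.2.2 ∧
    u t.2.1 < u t.1 ∧ u t.1 < u t.2.2.2 ∧ u t.2.2.2 < u t.2.2.1}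

open Finset

variable {n k : ℕ}

theorem card_filter_strictMono_fin :
    #{f : Fin k → Fin n | StrictMono f} = n.choose k := by
  rw [← Fintype.card_subtype, ← Nat.card_eq_fintype_card]
  calc Nat.card {f : Fin k → Fin n // StrictMono f}
      = Nat.card (Fin k ↪o Fin n) := Nat.card_congr
        { toFun f := OrderEmbedding.ofStrictMono f.1 f.2
          invFun g := ⟨g, g.strictMono⟩
          left_inv _ := rfl
          right_inv _ := rfl }
    _ = Nat.card (Set.powersetCard (Fin n) k) := Nat.card_congr Set.powersetCard.ofFinEmbEquiv
    _ = n.choose k := by rw [Set.powersetCard.card, Nat.card_fin]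

theorem card_filter_strictMono_apply_mem_le (s : Finset (Fin n)) (j : Fin (k + 1)) :
    #{f : Fin (k + 1) → Fin n | StrictMono f ∧ f j ∈ s} ≤ #s * n.choose k := by
  rw [← card_filter_strictMono_fin, ← card_product]
  refine card_le_card_of_injOn (fun f ↦ (f j, j.removeNth f)) ?_ ?_
  · intro f hf
    simp only [coe_filter, Set.mem_ofPred_eq, mem_univ, true_and] at hf
    simp only [coe_product, Set.mem_prod, mem_coe, mem_filter, mem_univ, true_and]
    exact ⟨hf.2, hf.1.comp (Fin.strictMono_succAbove j)⟩
  · intro f _ g _ hfg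
    simp only [Prod.mk.injEq] at hfg
    rw [← Fin.insertNth_self_removeNth j f, ← Fin.insertNth_self_removeNth j g, hfg.1, hfg.2]

theorem card_filter_strictMono_exists_mem_le (s : Finset (Fin n)) :
    #{f : Fin (k + 1) → Fin n | StrictMono f ∧ ∃ j, f j ∈ s} ≤ (k + 1) * (#s * n.choose k) := by
  have hunion : ({f : Fin (k + 1) → Fin n | StrictMono f ∧ ∃ j, f j ∈ s} : Finset _) =
      univ.biUnion fun j ↦ {f | StrictMono f ∧ f j ∈ s} := by
    ext f; simp
  rw [hunion]
  simpa using card_biUnion_le_card_mul univ _ _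
    fun j _ ↦ card_filter_strictMono_apply_mem_le s j

theorem card_filter_strictMono_comp_le {α : Type*} [DecidableEq α] (P : (Fin (k + 1) → α) → Prop)
    [DecidablePred P] (u u' : Fin n → α) :
    #{f : Fin (k + 1) → Fin n | StrictMono f ∧ P (u ∘ f)} ≤
      #{f : Fin (k + 1) → Fin n | StrictMono f ∧ P (u' ∘ f)} +
        (k + 1) * (#{i | u i ≠ u' i} * n.choose k) := by
  refine (card_le_card fun f hf ↦ ?_).trans
    ((card_union_le _ _).trans (add_le_add_right (card_filter_strictMono_exists_mem_le _) _))
  simp only [mem_filter, mem_univ, true_and, mem_union] at hf ⊢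
  by_cases hs : ∃ j, u (f j) ≠ u' (f j)
  · exact Or.inr ⟨hf.1, hs⟩
  · have hagree : u ∘ f = u' ∘ f := funext (not_exists_not.1 hs)
    exact Or.inl (hagree ▸ hf)

abbrev Is2143 {α : Type*} [LT α] (g : Fin 4 → α) : Prop :=
  g 1 < g 0 ∧ g 0 < g 3 ∧ g 3 < g 2

theorem N2143_eq_card (u : Equiv.Perm (Fin n)) :
    N2143 n u = #{f : Fin 4 → Fin n | StrictMono f ∧ Is2143 (u ∘ f)} := by
  rw [← Fintype.card_subtype, ← Nat.card_eq_fintype_card, N2143]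
  refine Nat.card_congr (Equiv.subtypeEquiv
    { toFun t := ![t.1, t.2.1, t.2.2.1, t.2.2.2]
      invFun f := (f 0, f 1, f 2, f 3)
      left_inv _ := rfl
      right_inv f := by ext i; fin_cases i <;> rfl } fun t ↦ ?_)
  change _ ↔ StrictMono ![t.1, t.2.1, t.2.2.1, t.2.2.2] ∧
    Is2143 (u ∘ ![t.1, t.2.1, t.2.2.1, t.2.2.2])
  simp [Is2143, and_assoc]

theorem six_mul_choose_three_le (n : ℕ) : 6 * n.choose 3 ≤ n ^ 3 := by
  have := Nat.descFactorial_eq_factorial_mul_choose n 3 ▸ Nat.descFactorial_le_pow n 3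
  rw [show Nat.factorial 3 = 6 from rfl] at this
  omega

/-- if `u, u' ∈ S_n` differ in exactly three positions, then
`N_{2143,n}(u) - N_{2143,n}(u') ≤ 2n³ + 3n² - n`. -/
theorem N2143_diff_le (n : ℕ) (u u' : Equiv.Perm (Fin n))
    (h : {i : Fin n | u i ≠ u' i}.ncard = 3) :
    (N2143 n u : ℤ) - (N2143 n u' : ℤ) ≤ 2 * (n : ℤ) ^ 3 + 3 * (n : ℤ) ^ 2 - n := by
  have hcard : #{i | u i ≠ u' i} = 3 := by
    rwa [Set.ncard_eq_toFinset_card', Set.toFinset_ofPred] at h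
  have hN : N2143 n u ≤ N2143 n u' + 2 * n ^ 3 := by
    have hcount := card_filter_strictMono_comp_le Is2143 u u'
    rw [hcard] at hcount
    rw [N2143_eq_card, N2143_eq_card]
    linarith [six_mul_choose_three_le n]
  have hn : (n : ℤ) ≤ 3 * n ^ 2 := by nlinarith
  zify at hN
  linarith
end
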